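/- arXiv:math/0701312 — 2 statements merged into one kernel-verified Lean document; each statement's English description precedes it below -/
import Mathlib

section
/- Let F, G be coprime completely reducible homogeneous polynomials of the same degree d ≥ 1 in R = MvPolynomial (Fin (n+1)) ℂ, let P_1 = F, P_2 = G, P_3, …, P_k be pairwise distinct completely reducible members of the pencil 𝒫 with product Q̃ and radical Q, and let a_i = (Q/Q̃)·(F·∂_iG − G·∂_iF) be the polynomial coefficients of ω = (Q/Q̃)(F dG − G dF). Then for every linear factor α = Σ_j c_j x_j of Q and all indices 0 ≤ i, j ≤ n, the linear form α divides c_i·a_j − c_j·a_i (i.e. α divides the coefficients of dα ∧ ω, so each hyperplane of the arrangement is invariant by the associated foliation). -/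
/-!
A linear factor α of Q is prime and divides exactly one member P_s of the pencil (if it divided
two, it would divide F and G), hence to the full multiplicity m: P_s = α^m B. For any other
member P_r, P_s dP_r - P_r dP_s is a nonzero constant μ times F dG - G dF, and
P_s dP_r - P_r dP_s = α^(m-1) (α (B dP_r - P_r dB) - m B P_r dα).
Wedging with dα kills the last term, so α^m divides
dα ∧ (P_s dP_r - P_r dP_s) = μ α^(m-1) D (dα ∧ ω), where D is the product of the other factors
of Q̃/Q. As α is prime to μ D, α divides dα ∧ ω.
-/

open MvPolynomial

noncomputable section

/-- A linear form: a nonzero homogeneous polynomial of degree 1. -/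
def IsLinearForm (n : ℕ) (α : MvPolynomial (Fin (n + 1)) ℂ) : Prop :=
  α ≠ 0 ∧ α.IsHomogeneous 1

/-- A completely reducible polynomial: a product of linear forms. -/
def CompletelyReducible (n : ℕ) (P : MvPolynomial (Fin (n + 1)) ℂ) : Prop :=
  ∃ s : Multiset (MvPolynomial (Fin (n + 1)) ℂ),
    (∀ α ∈ s, IsLinearForm n α) ∧ P = s.prod

/-- F and G have no common non-unit factor. -/
def RelPrime (n : ℕ) (F G : MvPolynomial (Fin (n + 1)) ℂ) : Prop :=
  ∀ p : MvPolynomial (Fin (n + 1)) ℂ, p ∣ F → p ∣ G → IsUnit p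

/-- The generic fiber of the pencil generated by F and G is irreducible. -/
def GenericFiberIrreducible (n : ℕ) (F G : MvPolynomial (Fin (n + 1)) ℂ) : Prop :=
  {c : ℂ | ¬ Irreducible (F + C c * G)}.Finite

theorem Prime.exists_pow_dvd_of_pow_dvd_prod {M ι : Type*} [CommMonoidWithZero M]
    [IsCancelMulZero M] [Fintype ι] {p : M} (hp : Prime p) {f : ι → M}
    (hf : ∀ i j, p ∣ f i → p ∣ f j → i = j) {m : ℕ} (hm : m ≠ 0) (h : p ^ m ∣ ∏ i, f i) :
    ∃ i, p ^ m ∣ f i := by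
  classical
  obtain ⟨i, -, hi⟩ := hp.exists_mem_finset_dvd ((dvd_pow_self p hm).trans h)
  refine ⟨i, hp.pow_dvd_of_dvd_mul_right m (b := ∏ j ∈ Finset.univ.erase i, f j)
    (fun hrest => ?_) ?_⟩
  · obtain ⟨j, hj, hj'⟩ := hp.exists_mem_finset_dvd hrest
    exact (Finset.mem_erase.mp hj).1 (hf j i hj' hi)
  · rwa [← Finset.mul_prod_erase _ _ (Finset.mem_univ i)] at h

namespace MvPolynomial

variable {σ R K : Type*}

theorem IsHomogeneous.pderiv_eq_C_coeff [CommSemiring R] {α : MvPolynomial σ R}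
    (hα : α.IsHomogeneous 1) (i : σ) : pderiv i α = C (α.coeff (Finsupp.single i 1)) := by
  classical
  have hspan : α ∈ Submodule.span R (Set.range X) := by
    rw [← homogeneousSubmodule_one_eq_span_X]; exact hα
  clear hα
  induction hspan using Submodule.span_induction with
  | mem _ hx =>
    obtain ⟨j, rfl⟩ := hx
    by_cases hij : j = i
    · simp [hij]
    · simp [pderiv_X_of_ne hij, coeff_X, Finsupp.single_left_inj one_ne_zero, hij]
  | zero => simp
  | add _ _ _ _ hx hy => simp [hx, hy]
  | smul r _ _ hx => simp [hx, smul_eq_C_mul]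

theorem prime_of_isHomogeneous_one [Field K] {α : MvPolynomial σ K} (h0 : α ≠ 0)
    (hα : α.IsHomogeneous 1) : Prime α := by
  refine (irreducible_of_totalDegree_eq_one (hα.totalDegree h0) fun x hx => ?_).prime
  obtain ⟨d, hd⟩ := ne_zero_iff.mp h0
  exact (ne_zero_of_dvd_ne_zero hd (hx d)).isUnit

theorem exists_eq_C_mul_of_dvd [CommRing R] [IsDomain R] {p q : MvPolynomial σ R} (hpq : p ∣ q)
    (hq : q ≠ 0) (hdeg : q.totalDegree ≤ p.totalDegree) : ∃ c, q = C c * p := by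
  obtain ⟨r, rfl⟩ := hpq
  obtain ⟨hp, hr⟩ := mul_ne_zero_iff.mp hq
  rw [totalDegree_mul_of_isDomain hp hr] at hdeg
  refine ⟨r.coeff 0, ?_⟩
  rw [mul_comm, ← totalDegree_eq_zero_iff_eq_C.mp (by omega)]

noncomputable def wronskian [CommRing R] (i : σ) (F G : MvPolynomial σ R) : MvPolynomial σ R :=
  F * pderiv i G - G * pderiv i F

theorem wronskian_pencil [CommRing R] (i : σ) (F G : MvPolynomial σ R) (a b a' b' : R) :
    wronskian i (C a * F + C b * G) (C a' * F + C b' * G) =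
      C (a * b' - b * a') * wronskian i F G := by
  simp only [wronskian, map_add, pderiv_C_mul, map_sub, map_mul]
  ring

theorem pow_succ_dvd_wronskian_wedge [CommRing R] {α P : MvPolynomial σ R} {e : ℕ}
    (hα : α.IsHomogeneous 1) (hP : α ^ (e + 1) ∣ P) (P' : MvPolynomial σ R) (i j : σ) :
    α ^ (e + 1) ∣ C (α.coeff (Finsupp.single i 1)) * wronskian j P P'
      - C (α.coeff (Finsupp.single j 1)) * wronskian i P P' := by
  obtain ⟨B, rfl⟩ := hP
  refine Dvd.intro (C (α.coeff (Finsupp.single i 1)) * (B * pderiv j P' - pderiv j B * P')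
      - C (α.coeff (Finsupp.single j 1)) * (B * pderiv i P' - pderiv i B * P')) ?_
  simp only [wronskian, Derivation.leibniz, Derivation.leibniz_pow, hα.pderiv_eq_C_coeff,
    smul_eq_mul, nsmul_eq_mul]
  ring

theorem dvd_of_dvd_pencil [Field K] {p F G : MvPolynomial σ K} {a b a' b' : K}
    (h : p ∣ C a * F + C b * G) (h' : p ∣ C a' * F + C b' * G) (hab : a * b' ≠ b * a') :
    p ∣ F ∧ p ∣ G := by
  have hμ : IsUnit (C (a * b' - b * a') : MvPolynomial σ K) :=
    (Ne.isUnit (sub_ne_zero.mpr hab)).map C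
  constructor
  · rw [← hμ.dvd_mul_left]
    convert dvd_sub (h.mul_left (C b')) (h'.mul_left (C b)) using 1
    simp only [map_sub, map_mul]; ring
  · rw [← hμ.dvd_mul_left]
    convert dvd_sub (h'.mul_left (C a)) (h.mul_left (C a')) using 1
    simp only [map_sub, map_mul]; ring

theorem dvd_wedge_of_pow_dvd_pencil [Field K] {α F G D : MvPolynomial σ K}
    {a : σ → MvPolynomial σ K} {e : ℕ} {c c' : K × K} (hαp : Prime α) (hα : α.IsHomogeneous 1)
    (hD : ¬ α ∣ D) (ha : ∀ i, a i * (α ^ e * D) = wronskian i F G)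
    (hP : α ^ (e + 1) ∣ C c.1 * F + C c.2 * G) (hc : c.1 * c'.2 ≠ c.2 * c'.1) (i j : σ) :
    α ∣ C (α.coeff (Finsupp.single i 1)) * a j - C (α.coeff (Finsupp.single j 1)) * a i := by
  have hμ : IsUnit (C (c.1 * c'.2 - c.2 * c'.1) : MvPolynomial σ K) :=
    (Ne.isUnit (sub_ne_zero.mpr hc)).map C
  have hdvd : α ∣ C (c.1 * c'.2 - c.2 * c'.1) * D * (C (α.coeff (Finsupp.single i 1)) * a j
      - C (α.coeff (Finsupp.single j 1)) * a i) := by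
    have hw := pow_succ_dvd_wronskian_wedge hα hP (C c'.1 * F + C c'.2 * G) i j
    rw [wronskian_pencil, wronskian_pencil, ← ha, ← ha] at hw
    rw [← mul_dvd_mul_iff_left (pow_ne_zero e hαp.ne_zero), ← pow_succ]
    convert hw using 1
    ring
  rcases hαp.dvd_or_dvd hdvd with h | h
  · rcases hαp.dvd_or_dvd h with h | h
    · exact absurd (isUnit_of_dvd_unit h hμ) hαp.not_isUnit
    · exact absurd h hD
  · exact h

end MvPolynomial

/-- Each hyperplane of the arrangement is invariant by the associated foliation:
for every linear factor α = Σⱼ cⱼ xⱼ of Q and all indices i, j, the linear form α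
divides cᵢ·aⱼ - cⱼ·aᵢ, i.e. α divides the coefficients of dα ∧ ω. -/
theorem hyperplanes_invariant_by_foliation
    (n k u : ℕ) (hk : 2 ≤ k)
    (F G : MvPolynomial (Fin (n + 1)) ℂ)
    (hcop : RelPrime n F G)
    (c : Fin k → ℂ × ℂ)
    (hprop : ∀ i j, i ≠ j → (c i).1 * (c j).2 ≠ (c i).2 * (c j).1)
    (P : Fin k → MvPolynomial (Fin (n + 1)) ℂ)
    (hP : ∀ i, P i = C (c i).1 * F + C (c i).2 * G)
    (α : Fin u → MvPolynomial (Fin (n + 1)) ℂ)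
    (hα : ∀ i, IsLinearForm n (α i))
    (hαprop : ∀ i j, i ≠ j → ∀ t : ℂ, α i ≠ C t * α j)
    (m : Fin u → ℕ) (hm : ∀ i, 1 ≤ m i)
    (hQt : ∏ i, P i = ∏ i, α i ^ m i)
    (a : Fin (n + 1) → MvPolynomial (Fin (n + 1)) ℂ)
    (ha : ∀ i, a i * ∏ j, α j ^ (m j - 1) = F * pderiv i G - G * pderiv i F) :
    ∀ t : Fin u, ∀ i j : Fin (n + 1),
      α t ∣ (C ((α t).coeff (Finsupp.single i 1)) * a j
              - C ((α t).coeff (Finsupp.single j 1)) * a i) := by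
  intro t i j
  obtain ⟨hα0, hαhom⟩ := hα t
  have hprime := prime_of_isHomogeneous_one hα0 hαhom
  obtain ⟨e, he⟩ := Nat.exists_eq_add_of_le' (hm t)
  obtain ⟨s, hs⟩ : ∃ s, α t ^ (e + 1) ∣ P s := by
    refine hprime.exists_pow_dvd_of_pow_dvd_prod (fun s r hs hr => ?_) e.succ_ne_zero ?_
    · by_contra hsr
      rw [hP] at hs hr
      obtain ⟨hF, hG⟩ := dvd_of_dvd_pencil hs hr (hprop s r hsr)
      exact hprime.not_isUnit (hcop _ hF hG)
    · rw [hQt, ← he]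
      exact Finset.dvd_prod_of_mem _ (Finset.mem_univ t)
  obtain ⟨r, hrs⟩ := Fintype.exists_ne_of_one_lt_card (by rw [Fintype.card_fin]; omega) s
  have hD : ¬ α t ∣ ∏ l ∈ Finset.univ.erase t, α l ^ (m l - 1) := by
    rw [hprime.dvd_finsetProd_iff]
    rintro ⟨l, hl, hdvd⟩
    obtain ⟨b, hb⟩ := exists_eq_C_mul_of_dvd (hprime.dvd_of_dvd_pow hdvd) (hα l).1
      (by rw [(hα l).2.totalDegree (hα l).1, hαhom.totalDegree hα0])
    exact hαprop l t (Finset.ne_of_mem_erase hl) b hb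
  refine dvd_wedge_of_pow_dvd_pencil hprime hαhom hD (fun i => ?_) (hP s ▸ hs)
    (hprop s r hrs.symm) i j
  rw [wronskian, ← ha i, ← Finset.mul_prod_erase _ _ (Finset.mem_univ t), he,
    Nat.add_sub_cancel]

end
end

section
/- Let d ≥ 2 and, in MvPolynomial (Fin 4) ℂ with variables x_0, x_1, x_2, x_3, set F_d = (x_0^d − x_1^d)(x_2^d − x_3^d) and G_d = (x_0^d − x_2^d)(x_1^d − x_3^d). Then: (a) F_d − G_d = (x_0^d − x_3^d)(x_2^d − x_1^d); (b) F_d and G_d are coprime; (c) each of F_d, G_d and F_d − G_d is completely reducible (a product of 2d linear forms over ℂ); and (d) the pencil generated by F_d and G_d is essential, i.e. the linear factors of F_d together with those of G_d span the full 4-dimensional space of degree-1 forms. Hence for every d ≥ 2 there is an essential pencil on ℙ³ with at least three completely reducible fibers. -/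
/-!
Over `ℂ`, `x_i^d - x_j^d = ∏_{ζ^d = 1} (x_i - ζ x_j)`, which gives the factorizations into `2d`
linear forms. The linear factors of `F` live on the variable pairs `{0,1}, {2,3}` and those of `G`
on `{0,2}, {1,3}`; linear forms `x_i - a x_j`, `x_k - b x_l` (`b ≠ 0`) on different pairs are
coprime irreducibles, so `F` and `G` are coprime. For `d ≥ 2` a primitive root `ω ≠ 1` gives two
factors `x_i - x_j`, `x_i - ω x_j` of `x_i^d - x_j^d`, which span `⟨x_i, x_j⟩`; hence the linear
factors of `F` alone already span all linear forms.
-/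

open MvPolynomial

noncomputable section

namespace MvPolynomial

variable {σ R K : Type*}

section CommRing

variable [CommRing R]

theorem isHomogeneous_X_sub_C_mul_X (i j : σ) (c : R) : (X i - C c * X j).IsHomogeneous 1 :=
  (isHomogeneous_X R i).sub <| by simpa using (isHomogeneous_C σ c).mul (isHomogeneous_X R j)

theorem X_sub_C_mul_X_dvd_X_pow_sub_X_pow {ζ : R} {d : ℕ} (hζ : ζ ^ d = 1) (i j : σ) :
    X i - C ζ * X j ∣ X i ^ d - X j ^ d := by
  have h := sub_dvd_pow_sub_pow (X i) (C ζ * X j) d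
  rwa [mul_pow, ← C_pow, hζ, C_1, one_mul] at h

theorem X_sub_C_mul_X_ne_zero [Nontrivial R] {i j : σ} (hij : i ≠ j) (c : R) :
    (X i - C c * X j : MvPolynomial σ R) ≠ 0 := by
  classical
  intro h
  simpa [hij.symm] using congrArg (eval (Pi.single i 1)) h

end CommRing

variable [Field K]

theorem irreducible_of_isHomogeneous_one {p : MvPolynomial σ K} (hp0 : p ≠ 0)
    (hp : p.IsHomogeneous 1) : Irreducible p := by
  refine irreducible_of_totalDegree_eq_one (hp.totalDegree hp0) fun x hx => ?_
  obtain ⟨m, hm⟩ := ne_zero_iff.mp hp0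
  exact isUnit_iff_ne_zero.mpr fun hx0 => hm (zero_dvd_iff.mp (hx0 ▸ hx m))

theorem irreducible_X_sub_C_mul_X {i j : σ} (hij : i ≠ j) (c : K) :
    Irreducible (X i - C c * X j) :=
  irreducible_of_isHomogeneous_one (X_sub_C_mul_X_ne_zero hij c)
    (isHomogeneous_X_sub_C_mul_X i j c)

theorem X_pow_sub_X_pow_eq_prod [Infinite K] {ω : K} {d : ℕ} (hd : 0 < d)
    (hω : IsPrimitiveRoot ω d) (i j : σ) :
    X i ^ d - X j ^ d = ∏ ζ ∈ Polynomial.nthRootsFinset d (1 : K), (X i - C ζ * X j) :=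
  MvPolynomial.funext fun v => by
    simpa using hω.pow_sub_pow_eq_prod_sub_mul (v i) (v j) hd

theorem isRelPrime_X_sub_C_mul_X [DecidableEq σ] {i j k l : σ} (hij : i ≠ j) (hkl : k ≠ l)
    (hne : ({k, l} : Finset σ) ≠ {i, j}) (a : K) {b : K} (hb : b ≠ 0) :
    IsRelPrime (X i - C a * X j) (X k - C b * X l) := by
  obtain ⟨m, hm, hmij⟩ : ∃ m ∈ ({k, l} : Finset σ), m ∉ ({i, j} : Finset σ) := by
    by_contra! h
    exact hne <| Finset.eq_of_subset_of_card_le h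
      (by simp [Finset.card_pair hij, Finset.card_pair hkl])
  -- At the coordinate point of `m` the first form vanishes and the second does not.
  rw [(irreducible_X_sub_C_mul_X hij a).isRelPrime_iff_not_dvd]
  intro hdvd
  simp only [Finset.mem_insert, Finset.mem_singleton, not_or] at hm hmij
  have h := map_dvd (eval (Pi.single m 1)) hdvd
  simp only [map_sub, map_mul, eval_X, eval_C, Pi.single_apply, if_neg (Ne.symm hmij.1),
    if_neg (Ne.symm hmij.2), mul_zero, sub_zero, zero_dvd_iff] at h
  rcases hm with rfl | rfl
  · simp [hkl.symm] at h
  · simp [hkl, hb] at h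

theorem isRelPrime_X_pow_sub_X_pow [Infinite K] [DecidableEq σ] {ω : K} {d : ℕ} (hd : 0 < d)
    (hω : IsPrimitiveRoot ω d) {i j k l : σ} (hij : i ≠ j) (hkl : k ≠ l)
    (hne : ({k, l} : Finset σ) ≠ {i, j}) :
    IsRelPrime (X i ^ d - X j ^ d : MvPolynomial σ K) (X k ^ d - X l ^ d) := by
  rw [X_pow_sub_X_pow_eq_prod hd hω, X_pow_sub_X_pow_eq_prod hd hω]
  exact IsRelPrime.prod_left fun ζ _ => IsRelPrime.prod_right fun η hη =>
    isRelPrime_X_sub_C_mul_X hij hkl hne ζ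
    (Polynomial.ne_zero_of_mem_nthRootsFinset one_ne_zero hη)

theorem X_mem_of_X_sub_C_mul_X_mem {V : Submodule K (MvPolynomial σ K)} {i j : σ} {a b : K}
    (hab : a ≠ b) (ha : X i - C a * X j ∈ V) (hb : X i - C b * X j ∈ V) : X i ∈ V ∧ X j ∈ V := by
  have hj : X j ∈ V := by
    have hdiff : (X i - C a * X j) - (X i - C b * X j) = C (b - a) * X j := by
      rw [C_sub]; ring
    have h := V.smul_mem (b - a)⁻¹ (V.sub_mem ha hb)
    rwa [hdiff, smul_eq_C_mul, ← mul_assoc, ← C_mul, inv_mul_cancel₀ (sub_ne_zero.mpr hab.symm),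
      C_1, one_mul] at h
  have hi : X i = (X i - C a * X j) + a • X j := by rw [smul_eq_C_mul]; ring
  exact ⟨hi ▸ V.add_mem ha (V.smul_mem a hj), hj⟩

end MvPolynomial

theorem isLinearForm_X_sub_C_mul_X {n : ℕ} {i j : Fin (n + 1)} (hij : i ≠ j) (c : ℂ) :
    IsLinearForm n (X i - C c * X j) :=
  ⟨X_sub_C_mul_X_ne_zero hij c, isHomogeneous_X_sub_C_mul_X i j c⟩

def IsProdOfLinearForms (n m : ℕ) (P : MvPolynomial (Fin (n + 1)) ℂ) : Prop :=
  ∃ s : Multiset (MvPolynomial (Fin (n + 1)) ℂ),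
    Multiset.card s = m ∧ (∀ α ∈ s, IsLinearForm n α) ∧ P = s.prod

theorem IsProdOfLinearForms.mul {n a b : ℕ} {P Q : MvPolynomial (Fin (n + 1)) ℂ}
    (hP : IsProdOfLinearForms n a P) (hQ : IsProdOfLinearForms n b Q) :
    IsProdOfLinearForms n (a + b) (P * Q) := by
  obtain ⟨s, hs, hsl, rfl⟩ := hP
  obtain ⟨t, ht, htl, rfl⟩ := hQ
  refine ⟨s + t, by simp [hs, ht], fun α hα => ?_, (Multiset.prod_add s t).symm⟩
  exact (Multiset.mem_add.mp hα).elim (hsl α) (htl α)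

theorem isProdOfLinearForms_X_pow_sub_X_pow {n d : ℕ} (hd : 0 < d) {i j : Fin (n + 1)}
    (hij : i ≠ j) : IsProdOfLinearForms n d (X i ^ d - X j ^ d) := by
  have hω := Complex.isPrimitiveRoot_exp d hd.ne'
  refine ⟨(Polynomial.nthRootsFinset d (1 : ℂ)).val.map (fun ζ => X i - C ζ * X j),
    by simp [hω.card_nthRootsFinset], ?_, X_pow_sub_X_pow_eq_prod hd hω i j⟩
  simp only [Multiset.mem_map]
  rintro _ ⟨ζ, -, rfl⟩
  exact isLinearForm_X_sub_C_mul_X hij ζ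

theorem X_mem_span_linearFactors {n d : ℕ} (hd : 2 ≤ d) {P : MvPolynomial (Fin (n + 1)) ℂ}
    {i j : Fin (n + 1)} (hij : i ≠ j) (hP : X i ^ d - X j ^ d ∣ P) :
    X i ∈ Submodule.span ℂ {α | IsLinearForm n α ∧ α ∣ P} ∧
      X j ∈ Submodule.span ℂ {α | IsLinearForm n α ∧ α ∣ P} := by
  have hω := Complex.isPrimitiveRoot_exp d (by omega)
  have mem {ζ : ℂ} (hζ : ζ ^ d = 1) :
      X i - C ζ * X j ∈ Submodule.span ℂ {α | IsLinearForm n α ∧ α ∣ P} :=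
    Submodule.subset_span
      ⟨isLinearForm_X_sub_C_mul_X hij ζ, (X_sub_C_mul_X_dvd_X_pow_sub_X_pow hζ i j).trans hP⟩
  exact X_mem_of_X_sub_C_mul_X_mem (hω.ne_one (by omega)).symm (mem (one_pow d))
    (mem hω.pow_eq_one)

/-- The family of pencils on ℙ³ generated by F_d = (x₀^d - x₁^d)(x₂^d - x₃^d) and
G_d = (x₀^d - x₂^d)(x₁^d - x₃^d): (a) F_d - G_d = (x₀^d - x₃^d)(x₂^d - x₁^d);
(b) F_d and G_d are coprime; (c) each of F_d, G_d, F_d - G_d is a product of 2d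
linear forms; (d) the pencil is essential. Hence for every d ≥ 2 there is an
essential pencil on ℙ³ with at least three completely reducible fibers. -/
theorem essential_pencil_on_P3
    (d : ℕ) (hd : 2 ≤ d)
    (F G : MvPolynomial (Fin (3 + 1)) ℂ)
    (hFdef : F = (X 0 ^ d - X 1 ^ d) * (X 2 ^ d - X 3 ^ d))
    (hGdef : G = (X 0 ^ d - X 2 ^ d) * (X 1 ^ d - X 3 ^ d)) :
    (F - G = (X 0 ^ d - X 3 ^ d) * (X 2 ^ d - X 1 ^ d)) ∧
    RelPrime 3 F G ∧
    (∃ s : Multiset (MvPolynomial (Fin (3 + 1)) ℂ),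
      Multiset.card s = 2 * d ∧ (∀ α ∈ s, IsLinearForm 3 α) ∧ F = s.prod) ∧
    (∃ s : Multiset (MvPolynomial (Fin (3 + 1)) ℂ),
      Multiset.card s = 2 * d ∧ (∀ α ∈ s, IsLinearForm 3 α) ∧ G = s.prod) ∧
    (∃ s : Multiset (MvPolynomial (Fin (3 + 1)) ℂ),
      Multiset.card s = 2 * d ∧ (∀ α ∈ s, IsLinearForm 3 α) ∧ F - G = s.prod) ∧
    (∀ i : Fin (3 + 1),
      X i ∈ Submodule.span ℂ
        {α : MvPolynomial (Fin (3 + 1)) ℂ | IsLinearForm 3 α ∧ (α ∣ F ∨ α ∣ G)}) := by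
  have hd0 : 0 < d := by omega
  have hω := Complex.isPrimitiveRoot_exp d hd0.ne'
  have hFG : F - G = (X 0 ^ d - X 3 ^ d) * (X 2 ^ d - X 1 ^ d) := by
    rw [hFdef, hGdef]; ring
  have hcoprime : IsRelPrime F G := by
    rw [hFdef, hGdef]
    refine .mul_left (.mul_right ?_ ?_) (.mul_right ?_ ?_) <;>
      exact isRelPrime_X_pow_sub_X_pow hd0 hω (by decide) (by decide) (by decide)
  have hfactor {i j k l : Fin (3 + 1)} (hij : i ≠ j) (hkl : k ≠ l) :
      IsProdOfLinearForms 3 (2 * d) ((X i ^ d - X j ^ d) * (X k ^ d - X l ^ d)) :=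
    two_mul d ▸ (isProdOfLinearForms_X_pow_sub_X_pow hd0 hij).mul
      (isProdOfLinearForms_X_pow_sub_X_pow hd0 hkl)
  have hspan : Submodule.span ℂ {α | IsLinearForm 3 α ∧ α ∣ F} ≤
      Submodule.span ℂ {α | IsLinearForm 3 α ∧ (α ∣ F ∨ α ∣ G)} :=
    Submodule.span_mono fun α hα => ⟨hα.1, .inl hα.2⟩
  have h01 := X_mem_span_linearFactors hd (i := 0) (j := 1) (by decide)
    (hFdef ▸ dvd_mul_right _ _)
  have h23 := X_mem_span_linearFactors hd (i := 2) (j := 3) (by decide)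
    (hFdef ▸ dvd_mul_left _ _)
  refine ⟨hFG, fun _ hpF hpG => hcoprime hpF hpG, hFdef ▸ hfactor (by decide) (by decide),
    hGdef ▸ hfactor (by decide) (by decide), hFG ▸ hfactor (by decide) (by decide), ?_⟩
  intro i
  fin_cases i
  exacts [hspan h01.1, hspan h01.2, hspan h23.1, hspan h23.2]
end
end
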